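/- Let α ≥ 1, r ≥ 0 and c > 0 satisfy r < c − 1 and r ≤ α − 2, and let x : [t₀,∞) → H be a twice continuously differentiable solution of ẍ(t) + (α/t)ẋ(t) + t^r·∇²f(x(t))ẋ(t) + c·t^{r−1}·∇f(x(t)) = 0. Then there exists a constant C > 0 such that f(x(t)) − min_H f ≤ C/t^{r+1} for all t ≥ t₀. -/

import Mathlib

/-! Along the flow, the anchored vector v(t) = (α - 1)(x t - x*) + t ẋ(t) + t^{r+1} ∇f(x t) has
derivative (r + 1 - c) t^r ∇f(x t): the Hessian and friction terms cancel exactly. Hence the energy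
E(t) = (c - r - 1) t^{r+1} (f(x t) - f x*) + ‖v(t)‖² / 2 has derivative
-(c - r - 1) t^r ((α - 1)⟨x t - x*, ∇f(x t)⟩ - (r + 1)(f(x t) - f x*) + t^{r+1} ‖∇f(x t)‖²),
which is nonpositive because convexity gives f(x t) - f x* ≤ ⟨x t - x*, ∇f(x t)⟩ and r + 1 ≤ α - 1.
So (c - r - 1) t^{r+1} (f(x t) - f x*) ≤ E(t) ≤ E(t₀). -/

open Real Set MeasureTheory

open InnerProductSpace RealInnerProductSpace

theorem ConvexOn.sub_le_fderiv_apply {E : Type*} [NormedAddCommGroup E] [NormedSpace ℝ E]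
    {f : E → ℝ} (hf : ConvexOn ℝ univ f) {p : E} (hp : DifferentiableAt ℝ f p) (q : E) :
    f p - f q ≤ fderiv ℝ f p (p - q) := by
  have hline : HasDerivAt (AffineMap.lineMap q p : ℝ → E) (p - q) 1 := AffineMap.hasDerivAt_lineMap
  have hp' : HasFDerivAt f (fderiv ℝ f p) (AffineMap.lineMap q p (1 : ℝ)) := by
    simpa using hp.hasFDerivAt
  simpa [slope_def_field] using
    (hf.comp_affineMap (AffineMap.lineMap q p)).slope_le_of_hasDerivAt
      (mem_univ 0) (mem_univ 1) one_pos (hp'.comp_hasDerivAt 1 hline)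

theorem ContDiff.differentiable_gradient {H : Type*} [NormedAddCommGroup H] [InnerProductSpace ℝ H]
    [CompleteSpace H] {f : H → ℝ} (hf : ContDiff ℝ 2 f) : Differentiable ℝ (gradient f) :=
  (toDual ℝ H).symm.differentiable.comp ((hf.fderiv_right le_rfl).differentiable one_ne_zero)

theorem hasDerivAt_rpow_add_one {r t : ℝ} (ht : 0 < t) :
    HasDerivAt (fun s : ℝ => s ^ (r + 1)) ((r + 1) * t ^ r) t := by
  simpa using Real.hasDerivAt_rpow_const (p := r + 1) (Or.inl ht.ne')

section Lyapunov

variable {H : Type*} [NormedAddCommGroup H] [InnerProductSpace ℝ H] [CompleteSpace H]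
  (f : H → ℝ) (xstar : H) (α r c : ℝ) (x x' : ℝ → H)

noncomputable def anchoredMomentum (t : ℝ) : H :=
  (α - 1) • (x t - xstar) + t • x' t + t ^ (r + 1) • gradient f (x t)

noncomputable def lyapunovEnergy (t : ℝ) : ℝ :=
  (c - r - 1) * (t ^ (r + 1) * (f (x t) - f xstar))
    + ‖anchoredMomentum f xstar α r x x' t‖ ^ 2 / 2

variable {f xstar α r c x x'} {x'' : ℝ → H} {t : ℝ}

theorem hasDerivAt_anchoredMomentum (ht : 0 < t) (hx : HasDerivAt x (x' t) t)
    (hx' : HasDerivAt x' (x'' t) t) (hg : DifferentiableAt ℝ (gradient f) (x t))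
    (hode : x'' t + (α / t) • x' t + (t ^ r) • (fderiv ℝ (gradient f) (x t)) (x' t)
        + (c * t ^ (r - 1)) • gradient f (x t) = 0) :
    HasDerivAt (anchoredMomentum f xstar α r x x')
      (((r + 1 - c) * t ^ r) • gradient f (x t)) t := by
  have hgx : HasDerivAt (fun s => gradient f (x s))
      (fderiv ℝ (gradient f) (x t) (x' t)) t := hg.hasFDerivAt.comp_hasDerivAt t hx
  have hpow : t ^ (r + 1) = t * t ^ r := by rw [rpow_add_one ht.ne', mul_comm]
  have hpow' : t ^ r = t * t ^ (r - 1) := by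
    rw [mul_comm, ← rpow_add_one ht.ne', sub_add_cancel]
  refine ((((hx.sub_const xstar).const_smul (α - 1)).fun_add
    ((hasDerivAt_id t).fun_smul hx')).fun_add
      ((hasDerivAt_rpow_add_one ht).fun_smul hgx)).congr_deriv ?_
  have hx'' : x'' t = -(α / t) • x' t - t ^ r • fderiv ℝ (gradient f) (x t) (x' t)
      - (c * t ^ (r - 1)) • gradient f (x t) := by
    linear_combination (norm := module) hode
  rw [id, hx'', hpow, hpow']
  match_scalars <;> field_simp <;> ring

theorem hasDerivAt_lyapunovEnergy (ht : 0 < t) (hx : HasDerivAt x (x' t) t)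
    (hx' : HasDerivAt x' (x'' t) t) (hf : DifferentiableAt ℝ f (x t))
    (hg : DifferentiableAt ℝ (gradient f) (x t))
    (hode : x'' t + (α / t) • x' t + (t ^ r) • (fderiv ℝ (gradient f) (x t)) (x' t)
        + (c * t ^ (r - 1)) • gradient f (x t) = 0) :
    HasDerivAt (lyapunovEnergy f xstar α r c x x')
      (-(c - r - 1) * t ^ r * ((α - 1) * ⟪x t - xstar, gradient f (x t)⟫
        - (r + 1) * (f (x t) - f xstar) + t ^ (r + 1) * ‖gradient f (x t)‖ ^ 2)) t := by
  have hfx : HasDerivAt (fun s => f (x s)) ⟪gradient f (x t), x' t⟫ t := by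
    rw [inner_gradient_left]
    exact hf.hasFDerivAt.comp_hasDerivAt t hx
  have hv := hasDerivAt_anchoredMomentum (xstar := xstar) ht hx hx' hg hode
  refine ((((hasDerivAt_rpow_add_one ht).mul (hfx.sub_const (f xstar))).const_mul
    (c - r - 1)).add (hv.norm_sq.div_const 2)).congr_deriv ?_
  simp only [anchoredMomentum, inner_add_left, inner_smul_left, inner_smul_right,
    real_inner_self_eq_norm_sq, real_inner_comm (x' t), RCLike.conj_to_real]
  rw [rpow_add_one ht.ne']
  ring

theorem le_lyapunovEnergy (t : ℝ) :
    (c - r - 1) * (t ^ (r + 1) * (f (x t) - f xstar)) ≤ lyapunovEnergy f xstar α r c x x' t :=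
  le_add_of_nonneg_right (by positivity)

theorem antitoneOn_lyapunovEnergy {t₀ : ℝ} (ht₀ : 0 < t₀) (hf : Differentiable ℝ f)
    (hg : Differentiable ℝ (gradient f)) (hconv : ConvexOn ℝ univ f) (hmin : ∀ y, f xstar ≤ f y)
    (hα : 1 ≤ α) (hrα : r ≤ α - 2) (hrc : r + 1 ≤ c)
    (hx : ∀ t ≥ t₀, HasDerivAt x (x' t) t) (hx' : ∀ t ≥ t₀, HasDerivAt x' (x'' t) t)
    (hode : ∀ t ≥ t₀,
      x'' t + (α / t) • x' t + (t ^ r) • (fderiv ℝ (gradient f) (x t)) (x' t)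
        + (c * t ^ (r - 1)) • gradient f (x t) = 0) :
    AntitoneOn (lyapunovEnergy f xstar α r c x x') (Ici t₀) := by
  have hE : ∀ t ∈ Ici t₀, HasDerivAt (lyapunovEnergy f xstar α r c x x') _ t := fun t ht =>
    hasDerivAt_lyapunovEnergy (ht₀.trans_le ht) (hx t ht) (hx' t ht) (hf _) (hg _) (hode t ht)
  refine antitoneOn_of_hasDerivWithinAt_nonpos (convex_Ici t₀)
    (fun t ht => (hE t ht).continuousAt.continuousWithinAt)
    (fun t ht => (hE t (interior_subset ht)).hasDerivWithinAt) fun t ht => ?_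
  rw [interior_Ici] at ht
  have ht' : 0 < t := ht₀.trans ht
  have hgap : 0 ≤ f (x t) - f xstar := sub_nonneg.2 (hmin _)
  have hfirst : f (x t) - f xstar ≤ ⟪x t - xstar, gradient f (x t)⟫ := by
    rw [real_inner_comm, inner_gradient_left]
    exact hconv.sub_le_fderiv_apply (hf _) xstar
  have hdissipation : 0 ≤ (α - 1) * ⟪x t - xstar, gradient f (x t)⟫
      - (r + 1) * (f (x t) - f xstar) + t ^ (r + 1) * ‖gradient f (x t)‖ ^ 2 := by
    have hgrad : 0 ≤ t ^ (r + 1) * ‖gradient f (x t)‖ ^ 2 := by positivity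
    have hweights := mul_le_mul_of_nonneg_right (show r + 1 ≤ α - 1 by linarith) hgap
    have hconvex := mul_le_mul_of_nonneg_left hfirst (show 0 ≤ α - 1 by linarith)
    linarith
  exact mul_nonpos_of_nonpos_of_nonneg
    (mul_nonpos_of_nonpos_of_nonneg (by linarith) (rpow_nonneg ht'.le r)) hdissipation

end Lyapunov

theorem dinavd_power_coefficients_rate_general
    {H : Type*} [NormedAddCommGroup H] [InnerProductSpace ℝ H] [CompleteSpace H]
    (f : H → ℝ) (hf : ContDiff ℝ 2 f) (hconv : ConvexOn ℝ Set.univ f)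
    (xstar : H) (hmin : ∀ y, f xstar ≤ f y)
    (t₀ : ℝ) (ht₀ : 0 < t₀)
    (α r c : ℝ) (hα : 1 ≤ α)
    (hrc : r < c - 1) (hrα : r ≤ α - 2)
    (x x' x'' : ℝ → H)
    (hx' : ∀ t ≥ t₀, HasDerivAt x (x' t) t)
    (hx'' : ∀ t ≥ t₀, HasDerivAt x' (x'' t) t)
    (hode : ∀ t ≥ t₀,
      x'' t + (α / t) • x' t + (t ^ r) • (fderiv ℝ (gradient f) (x t)) (x' t)
        + (c * t ^ (r - 1)) • gradient f (x t) = 0) :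
    ∃ C > 0, ∀ t ≥ t₀, f (x t) - f xstar ≤ C / t ^ (r + 1) := by
  set E := lyapunovEnergy f xstar α r c x x'
  have ha : 0 < c - r - 1 := by linarith
  have hanti : AntitoneOn E (Ici t₀) :=
    antitoneOn_lyapunovEnergy ht₀ (hf.differentiable two_ne_zero) hf.differentiable_gradient
      hconv hmin hα hrα (by linarith) hx' hx'' hode
  have hE₀ : 0 ≤ E t₀ := (mul_nonneg ha.le (mul_nonneg (rpow_nonneg ht₀.le _)
    (sub_nonneg.2 (hmin _)))).trans (le_lyapunovEnergy t₀)
  refine ⟨E t₀ / (c - r - 1) + 1, by positivity, fun t ht => ?_⟩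
  have hbound : t ^ (r + 1) * (f (x t) - f xstar) ≤ E t₀ / (c - r - 1) := by
    rw [le_div_iff₀' ha]
    exact (le_lyapunovEnergy t).trans (hanti self_mem_Ici ht ht)
  rw [le_div_iff₀' (rpow_pos_of_pos (ht₀.trans_le ht) _)]
  linarith

/-- Case 4 with β(t) = t^r and b(t) = c·t^{r-1}: convergence rate O(1/t^{r+1}). -/
theorem dinavd_power_coefficients_rate
    {H : Type*} [NormedAddCommGroup H] [InnerProductSpace ℝ H] [CompleteSpace H]
    (f : H → ℝ) (hf : ContDiff ℝ 2 f) (hconv : ConvexOn ℝ Set.univ f)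
    (xstar : H) (hmin : ∀ y, f xstar ≤ f y)
    (t₀ : ℝ) (ht₀ : 0 < t₀)
    (α r c : ℝ) (hα : 1 ≤ α) (hr : 0 ≤ r) (hc : 0 < c)
    (hrc : r < c - 1) (hrα : r ≤ α - 2)
    (x x' x'' : ℝ → H)
    (hx' : ∀ t ≥ t₀, HasDerivAt x (x' t) t)
    (hx'' : ∀ t ≥ t₀, HasDerivAt x' (x'' t) t)
    (hx''cont : ContinuousOn x'' (Set.Ici t₀))
    (hode : ∀ t ≥ t₀,
      x'' t + (α / t) • x' t + (t ^ r) • (fderiv ℝ (gradient f) (x t)) (x' t)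
        + (c * t ^ (r - 1)) • gradient f (x t) = 0) :
    ∃ C > 0, ∀ t ≥ t₀, f (x t) - f xstar ≤ C / t ^ (r + 1) :=
  dinavd_power_coefficients_rate_general f hf hconv xstar hmin t₀ ht₀ α r c hα hrc hrα x x' x'' hx'
    hx'' hode
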